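/- For every integer m ≥ 1, the formal power series J_m satisfies (1 + t) · J_m = (1 + t) · J_{m−1} + t · (1 + H_{m−1}) · J_m in ℤ⟦t⟧. -/

import Mathlib

/-!
Let `K_m` count the words of `J_m` that do not start with `m`. The letter `m` can only be
followed by a smaller letter, so a word of `J_m` is either in `K_m` or is `m` followed by a word
of `K_m`: `J_m = (1 + t) K_m`. Splitting a word of `J_m` that contains `m` at the first `m`, the
prefix is a word over `{1, …, m - 1}` that is empty or ends with `m - 1` (it must step up to `m`),
and the suffix is a word of `K_m`: `J_m = J_{m-1} + t (1 + H_{m-1}) K_m`. Multiplying the second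
identity by `1 + t` and substituting the first gives the recurrence.
-/

/-- `H m` is the formal power series in `ℤ⟦t⟧` whose coefficient of `t^n` (for
`n ≥ 1`) is the number of words `w₁ ⋯ wₙ` with letters in `{1, …, m}` satisfying
`w_{i+1} ≤ w_i + 1` and `w_{i+1} ≠ w_i`, ending with `wₙ = m`; its constant
coefficient is `0`, and `H 0 = 0`. -/
noncomputable def H (m : ℕ) : PowerSeries ℤ :=
  PowerSeries.mk fun n =>
    (Set.ncard {w : Fin n → ℕ |
      (∀ i, 1 ≤ w i ∧ w i ≤ m) ∧
      (∀ i : ℕ, ∀ h : i + 1 < n,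
        w ⟨i + 1, h⟩ ≤ w ⟨i, by omega⟩ + 1 ∧ w ⟨i + 1, h⟩ ≠ w ⟨i, by omega⟩) ∧
      ∃ h : 0 < n, w ⟨n - 1, by omega⟩ = m} : ℤ)

/-- `J m` is the formal power series in `ℤ⟦t⟧` whose coefficient of `t^n` (for
`n ≥ 0`) is the number of (possibly empty) words `w₁ ⋯ wₙ` with letters in
`{1, …, m}` satisfying `w_{i+1} ≤ w_i + 1` and `w_{i+1} ≠ w_i`; `J 0 = 1`. -/
noncomputable def J (m : ℕ) : PowerSeries ℤ :=
  PowerSeries.mk fun n =>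
    (Set.ncard {w : Fin n → ℕ |
      (∀ i, 1 ≤ w i ∧ w i ≤ m) ∧
      ∀ i : ℕ, ∀ h : i + 1 < n,
        w ⟨i + 1, h⟩ ≤ w ⟨i, by omega⟩ + 1 ∧ w ⟨i + 1, h⟩ ≠ w ⟨i, by omega⟩} : ℤ)


open PowerSeries

namespace List

theorem append_cons_inj_of_notMem_left {α : Type*} [DecidableEq α] {c : α} {u₁ u₂ v₁ v₂ : List α}
    (h₁ : c ∉ u₁) (h₂ : c ∉ u₂) (h : u₁ ++ c :: v₁ = u₂ ++ c :: v₂) : u₁ = u₂ ∧ v₁ = v₂ := by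
  have hlen : u₁.length = u₂.length := by
    simpa [idxOf_append_of_notMem h₁, idxOf_append_of_notMem h₂] using congrArg (idxOf c) h
  obtain ⟨rfl, hv⟩ := append_inj h hlen
  exact ⟨rfl, (cons_inj_right c).mp hv⟩

end List

section LengthGF

variable {α : Type*}

noncomputable def lengthGF (S : Set (List α)) : ℤ⟦X⟧ :=
  PowerSeries.mk fun n => ({l ∈ S | l.length = n}.ncard : ℤ)

def FiniteSections (S : Set (List α)) : Prop :=
  ∀ n, {l ∈ S | l.length = n}.Finite

theorem FiniteSections.subset {S T : Set (List α)} (hT : FiniteSections T) (hST : S ⊆ T) :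
    FiniteSections S :=
  fun n => (hT n).subset fun _ hl => ⟨hST hl.1, hl.2⟩

theorem sep_length_eq_image_ofFn (S : Set (List α)) (n : ℕ) :
    {l ∈ S | l.length = n} = List.ofFn '' {w : Fin n → α | List.ofFn w ∈ S} := by
  ext l
  constructor
  · rintro ⟨hl, rfl⟩
    exact ⟨l.get, by rwa [Set.mem_ofPred_eq, List.ofFn_get], List.ofFn_get l⟩
  · rintro ⟨w, hw, rfl⟩
    exact ⟨hw, List.length_ofFn⟩

theorem ncard_sep_length_eq (S : Set (List α)) (n : ℕ) :
    {l ∈ S | l.length = n}.ncard = {w : Fin n → α | List.ofFn w ∈ S}.ncard := by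
  rw [sep_length_eq_image_ofFn, Set.ncard_image_of_injective _ List.ofFn_injective]

theorem lengthGF_union {S T : Set (List α)} (hST : Disjoint S T) (hfin : FiniteSections (S ∪ T)) :
    lengthGF (S ∪ T) = lengthGF S + lengthGF T := by
  ext n
  simp only [lengthGF, coeff_mk, map_add, Set.mem_union, Set.sep_union]
  rw [Set.ncard_union_eq (hST.mono (Set.sep_subset _ _) (Set.sep_subset _ _))
    (hfin.subset Set.subset_union_left n) (hfin.subset Set.subset_union_right n), Nat.cast_add]

theorem lengthGF_cons_image (c : α) (S : Set (List α)) :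
    lengthGF (List.cons c '' S) = X * lengthGF S := by
  ext n
  rcases n with _ | n
  · have hempty : {l ∈ List.cons c '' S | l.length = 0} = ∅ :=
      Set.eq_empty_iff_forall_notMem.mpr fun _ ⟨⟨_, _, hl⟩, hlen⟩ => by simp [← hl] at hlen
    rw [coeff_zero_X_mul, lengthGF, coeff_mk, hempty, Set.ncard_empty, Nat.cast_zero]
  · have hsec : {l ∈ List.cons c '' S | l.length = n + 1} = List.cons c '' {l ∈ S | l.length = n} := by
      ext l
      simp only [Set.mem_ofPred_eq, Set.mem_image]
      constructor
      · rintro ⟨⟨l, hl, rfl⟩, hlen⟩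
        exact ⟨l, ⟨hl, by simpa using hlen⟩, rfl⟩
      · rintro ⟨l, ⟨hl, rfl⟩, rfl⟩
        exact ⟨⟨l, hl, rfl⟩, rfl⟩
    rw [lengthGF, coeff_mk, coeff_succ_X_mul, lengthGF, coeff_mk, hsec,
      Set.ncard_image_of_injective _ List.cons_injective]

theorem sep_length_image2_append (S T : Set (List α)) (n : ℕ) :
    {l ∈ Set.image2 (· ++ ·) S T | l.length = n} =
      (fun p : List α × List α => p.1 ++ p.2) '' {p ∈ S ×ˢ T | p.1.length + p.2.length = n} := by
  ext l
  constructor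
  · rintro ⟨⟨u, hu, v, hv, rfl⟩, rfl⟩
    exact ⟨(u, v), ⟨⟨hu, hv⟩, List.length_append.symm⟩, rfl⟩
  · rintro ⟨⟨u, v⟩, ⟨⟨hu, hv⟩, hlen⟩, rfl⟩
    exact ⟨⟨u, hu, v, hv, rfl⟩, List.length_append.trans hlen⟩

open Finset in
theorem ncard_sep_length_add_length {S T : Set (List α)} (hS : FiniteSections S)
    (hT : FiniteSections T) (n : ℕ) :
    {p ∈ S ×ˢ T | p.1.length + p.2.length = n}.ncard =
      ∑ ij ∈ antidiagonal n, {l ∈ S | l.length = ij.1}.ncard * {l ∈ T | l.length = ij.2}.ncard := by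
  classical
  have hunion : {p ∈ S ×ˢ T | p.1.length + p.2.length = n} =
      ↑((antidiagonal n).biUnion fun ij => (hS ij.1).toFinset ×ˢ (hT ij.2).toFinset) := by
    ext ⟨u, v⟩
    simp [and_assoc]
  have hdisj : (↑(antidiagonal n) : Set (ℕ × ℕ)).PairwiseDisjoint
      fun ij => (hS ij.1).toFinset ×ˢ (hT ij.2).toFinset := by
    rintro ⟨i, j⟩ hij ⟨i', j'⟩ hij' hne
    simp only [Finset.mem_coe, HasAntidiagonal.mem_antidiagonal] at hij hij'
    refine Finset.disjoint_left.mpr ?_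
    rintro ⟨u, v⟩ h h'
    simp only [Finset.mem_product, Set.Finite.mem_toFinset, Set.mem_ofPred_eq] at h h'
    exact hne (Prod.ext (h.1.2 ▸ h'.1.2) (by omega))
  rw [hunion, Set.ncard_coe_finset, card_biUnion hdisj]
  refine sum_congr rfl fun ij _ => ?_
  rw [card_product, Set.ncard_eq_toFinset_card _ (hS _), Set.ncard_eq_toFinset_card _ (hT _)]

theorem lengthGF_image2_append {S T : Set (List α)} (hS : FiniteSections S) (hT : FiniteSections T)
    (hinj : Set.InjOn (fun p : List α × List α => p.1 ++ p.2) (S ×ˢ T)) :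
    lengthGF (Set.image2 (· ++ ·) S T) = lengthGF S * lengthGF T := by
  ext n
  rw [lengthGF, coeff_mk, sep_length_image2_append, (hinj.mono (Set.sep_subset _ _)).ncard_image,
    ncard_sep_length_add_length hS hT, coeff_mul]
  simp only [lengthGF, coeff_mk, Nat.cast_sum, Nat.cast_mul]

end LengthGF

def WordStep (a b : ℕ) : Prop := b ≤ a + 1 ∧ b ≠ a

def words (m : ℕ) : Set (List ℕ) := {l | (∀ x ∈ l, 1 ≤ x ∧ x ≤ m) ∧ l.IsChain WordStep}

def wordsHeadNe (m : ℕ) : Set (List ℕ) := {l ∈ words m | ∀ a ∈ l.head?, a ≠ m}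

/-- Contains `[]` (vacuously), which accounts for the `1` in `1 + H m`. -/
def wordsLastEq (m : ℕ) : Set (List ℕ) := {l ∈ words m | ∀ a ∈ l.getLast?, a = m}

theorem nil_mem_words (m : ℕ) : [] ∈ words m := ⟨by simp, List.isChain_nil⟩

theorem nil_mem_wordsLastEq (m : ℕ) : [] ∈ wordsLastEq m := ⟨nil_mem_words m, by simp⟩

theorem cons_mem_words {a m : ℕ} {l : List ℕ} :
    a :: l ∈ words m ↔ (1 ≤ a ∧ a ≤ m) ∧ (∀ b ∈ l.head?, WordStep a b) ∧ l ∈ words m := by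
  simp only [words, Set.mem_ofPred_eq, List.forall_mem_cons, List.isChain_cons]
  tauto

theorem append_mem_words {m : ℕ} {u v : List ℕ} :
    u ++ v ∈ words m ↔
      u ∈ words m ∧ v ∈ words m ∧ ∀ a ∈ u.getLast?, ∀ b ∈ v.head?, WordStep a b := by
  simp only [words, Set.mem_ofPred_eq, List.forall_mem_append, List.isChain_append]
  tauto

theorem finiteSections_words (m : ℕ) : FiniteSections (words m) := by
  intro n
  rw [sep_length_eq_image_ofFn]
  refine ((Set.Finite.pi fun _ : Fin n => Set.finite_Icc 1 m).subset ?_).image _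
  intro w hw i _
  exact hw.1 _ (List.mem_ofFn.mpr ⟨i, rfl⟩)

theorem J_eq_lengthGF (m : ℕ) : J m = lengthGF (words m) := by
  ext n
  rw [J, lengthGF, coeff_mk, coeff_mk, ncard_sep_length_eq]
  congr! 3
  simp only [words, Set.mem_ofPred_eq, List.forall_mem_ofFn_iff, List.isChain_ofFn, WordStep]

theorem one_add_H_eq_lengthGF (m : ℕ) : 1 + H m = lengthGF (wordsLastEq m) := by
  ext n
  rw [H, lengthGF, map_add, coeff_mk, coeff_mk, coeff_one, ncard_sep_length_eq]
  rcases n with _ | n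
  · simp [nil_mem_wordsLastEq]
  · have hlast (w : Fin (n + 1) → ℕ) : (List.ofFn w).getLast? = some (w (Fin.last n)) := by
      rw [List.getLast?_eq_some_getLast (by simp), List.getLast_ofFn_succ]
    simp only [Nat.add_one_ne_zero, if_false, zero_add]
    congr! 3
    funext w
    simp only [wordsLastEq, words, Set.mem_ofPred_eq, List.forall_mem_ofFn_iff, List.isChain_ofFn,
      WordStep, hlast, Option.mem_def, Option.some.injEq, forall_eq', and_assoc]
    exact propext <| and_congr_right' <| and_congr_right' ⟨fun ⟨_, h⟩ => h, fun h => ⟨n.succ_pos, h⟩⟩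

theorem words_mono {m m' : ℕ} (h : m ≤ m') : words m ⊆ words m' :=
  fun _ hl => ⟨fun x hx => ⟨(hl.1 x hx).1, (hl.1 x hx).2.trans h⟩, hl.2⟩

theorem succ_notMem_of_mem_words {m : ℕ} {l : List ℕ} (hl : l ∈ words m) : m + 1 ∉ l :=
  fun h => by have := (hl.1 _ h).2; omega

theorem mem_words_of_notMem {m : ℕ} {l : List ℕ} (hl : l ∈ words (m + 1)) (h : m + 1 ∉ l) :
    l ∈ words m :=
  ⟨fun x hx => ⟨(hl.1 x hx).1,
    Nat.le_of_lt_succ <| (hl.1 x hx).2.lt_of_ne fun hx' => h (hx' ▸ hx)⟩, hl.2⟩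

theorem cons_image_wordsHeadNe_subset {m : ℕ} (hm : 1 ≤ m) :
    List.cons m '' wordsHeadNe m ⊆ words m := by
  rintro _ ⟨l, ⟨hl, hhead⟩, rfl⟩
  refine cons_mem_words.mpr ⟨⟨hm, le_rfl⟩, fun b hb => ⟨?_, hhead b hb⟩, hl⟩
  have := (hl.1 b (List.mem_of_mem_head? hb)).2
  omega

theorem words_eq_union_cons_image {m : ℕ} (hm : 1 ≤ m) :
    words m = wordsHeadNe m ∪ List.cons m '' wordsHeadNe m := by
  refine subset_antisymm ?_ (Set.union_subset (fun _ hl => hl.1) (cons_image_wordsHeadNe_subset hm))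
  rintro (_ | ⟨a, t⟩) hl
  · exact Or.inl ⟨hl, by simp⟩
  · by_cases ha : a = m
    · subst ha
      obtain ⟨-, hstep, ht⟩ := cons_mem_words.mp hl
      exact Or.inr ⟨t, ⟨ht, fun b hb => (hstep b hb).2⟩, rfl⟩
    · exact Or.inl ⟨hl, by simpa using ha⟩

theorem disjoint_wordsHeadNe_cons_image (m : ℕ) :
    Disjoint (wordsHeadNe m) (List.cons m '' wordsHeadNe m) := by
  rw [Set.disjoint_left]
  rintro _ ⟨-, hhead⟩ ⟨l, -, rfl⟩
  exact hhead m rfl rfl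

theorem words_succ_eq (M : ℕ) :
    words (M + 1) =
      words M ∪ Set.image2 (· ++ ·) (wordsLastEq M) (List.cons (M + 1) '' wordsHeadNe (M + 1)) := by
  refine subset_antisymm ?_ (Set.union_subset (words_mono M.le_succ) ?_)
  · intro l hl
    by_cases hin : M + 1 ∈ l
    · obtain ⟨u, v, hu, rfl, -⟩ := List.exists_erase_eq hin
      rw [append_mem_words, cons_mem_words] at hl
      obtain ⟨hu', ⟨-, hstep, hv⟩, hjoin⟩ := hl
      refine Or.inr ⟨u, ⟨mem_words_of_notMem hu' hu, fun a ha => ?_⟩, _,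
        ⟨v, ⟨hv, fun b hb => (hstep b hb).2⟩, rfl⟩, rfl⟩
      have := (hjoin a ha (M + 1) rfl).1
      have := (hu'.1 a (List.mem_of_getLast? ha)).2
      have : a ≠ M + 1 := fun h => hu (h ▸ List.mem_of_getLast? ha)
      omega
    · exact Or.inl (mem_words_of_notMem hl hin)
  · rintro _ ⟨u, ⟨hu, hlast⟩, _, hv, rfl⟩
    refine append_mem_words.mpr ⟨words_mono M.le_succ hu,
      cons_image_wordsHeadNe_subset M.succ_pos hv, fun a ha b hb => ?_⟩
    obtain ⟨v, -, rfl⟩ := hv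
    obtain rfl := hlast a ha
    obtain rfl : b = a + 1 := by simpa using hb.symm
    exact ⟨le_rfl, by omega⟩

theorem disjoint_words_image2_append (M : ℕ) :
    Disjoint (words M)
      (Set.image2 (· ++ ·) (wordsLastEq M) (List.cons (M + 1) '' wordsHeadNe (M + 1))) := by
  rw [Set.disjoint_left]
  rintro _ hl ⟨u, -, _, ⟨v, -, rfl⟩, rfl⟩
  exact succ_notMem_of_mem_words hl (by simp)

theorem injOn_append_wordsLastEq_prod (M : ℕ) :
    Set.InjOn (fun p : List ℕ × List ℕ => p.1 ++ p.2)
      (wordsLastEq M ×ˢ (List.cons (M + 1) '' wordsHeadNe (M + 1))) := by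
  rintro ⟨u₁, _⟩ ⟨hu₁, v₁, -, rfl⟩ ⟨u₂, _⟩ ⟨hu₂, v₂, -, rfl⟩ h
  obtain ⟨rfl, rfl⟩ := List.append_cons_inj_of_notMem_left
    (succ_notMem_of_mem_words hu₁.1) (succ_notMem_of_mem_words hu₂.1) h
  rfl

theorem lengthGF_words {m : ℕ} (hm : 1 ≤ m) :
    lengthGF (words m) = (1 + X) * lengthGF (wordsHeadNe m) := by
  have hfin := finiteSections_words m
  rw [words_eq_union_cons_image hm] at hfin ⊢
  rw [lengthGF_union (disjoint_wordsHeadNe_cons_image m) hfin, lengthGF_cons_image]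
  ring

theorem lengthGF_words_succ (M : ℕ) :
    lengthGF (words (M + 1)) =
      lengthGF (words M) + lengthGF (wordsLastEq M) * (X * lengthGF (wordsHeadNe (M + 1))) := by
  have hfin := finiteSections_words (M + 1)
  rw [words_succ_eq] at hfin ⊢
  rw [lengthGF_union (disjoint_words_image2_append M) hfin,
    lengthGF_image2_append ((finiteSections_words M).subset fun _ hl => hl.1)
      ((finiteSections_words (M + 1)).subset (cons_image_wordsHeadNe_subset M.succ_pos))
      (injOn_append_wordsLastEq_prod M),
    lengthGF_cons_image]

theorem J_recurrence (m : ℕ) (hm : 1 ≤ m) :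
    (1 + PowerSeries.X) * J m =
      (1 + PowerSeries.X) * J (m - 1) + PowerSeries.X * (1 + H (m - 1)) * J m := by
  obtain ⟨M, rfl⟩ := Nat.exists_eq_add_of_le' hm
  have hsplit := lengthGF_words (Nat.succ_pos M)
  have hfirst := lengthGF_words_succ M
  rw [Nat.add_sub_cancel, J_eq_lengthGF, J_eq_lengthGF, one_add_H_eq_lengthGF]
  linear_combination (1 + X) * hfirst - X * lengthGF (wordsLastEq M) * hsplit
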